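/- arXiv:0912.5233 — 4 statements merged into one kernel-verified Lean document; each statement's English description precedes it below -/
import Mathlib

section
/- Let A ∈ ℝ^{r×r} be symmetric idempotent and B = I − A. Then for every p ∈ ℝ^r and every coordinate index j, ‖p‖₁ ≥ |(Ap)_j| + |(Bp)_j|. -/
open Matrix BigOperators

/-- For `A` symmetric idempotent and `B = I − A`, every vector `p` and coordinate
`j` satisfy `‖p‖₁ ≥ |(Ap)_j| + |(Bp)_j|`. -/
theorem stmt4 (r : ℕ) (A : Matrix (Fin r) (Fin r) ℝ)
    (hsym : Aᵀ = A) (hidem : A * A = A) :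
    let B := (1 : Matrix (Fin r) (Fin r) ℝ) - A
    ∀ (p : Fin r → ℝ) (j : Fin r),
      |A.mulVec p j| + |B.mulVec p j| ≤ ∑ i, |p i| := by
  intro B p j
  have hAsym : ∀ i k, A k i = A i k := by
    intro i k
    conv_lhs => rw [← hsym]
    rw [Matrix.transpose_apply]
  have hdiag : A j j = ∑ k, (A j k)^2 := by
    conv_lhs => rw [← hidem]
    rw [Matrix.mul_apply]
    exact Finset.sum_congr rfl (fun k _ => by rw [hAsym j k, sq])
  have hd0 : 0 ≤ A j j := by rw [hdiag]; positivity
  have hd1 : A j j ≤ 1 := by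
    have h1 : (A j j)^2 ≤ ∑ k, (A j k)^2 :=
      Finset.single_le_sum (f := fun k => (A j k)^2) (fun k _ => sq_nonneg _)
        (Finset.mem_univ j)
    nlinarith [hdiag]
  have hBjk : ∀ k, B j k = (if j = k then (1:ℝ) else 0) - A j k := by
    intro k
    simp [B, Matrix.sub_apply, Matrix.one_apply]
  have key : ∀ k, |A j k| + |B j k| ≤ 1 := by
    intro k
    by_cases hk : j = k
    · subst hk
      rw [hBjk, if_pos rfl, abs_of_nonneg hd0,
        abs_of_nonneg (by linarith : (0:ℝ) ≤ 1 - A j j)]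
      linarith
    · have h2 : (A j j)^2 + (A j k)^2 ≤ ∑ i, (A j i)^2 := by
        have h3 := Finset.sum_le_sum_of_subset_of_nonneg
          (Finset.subset_univ ({j, k} : Finset (Fin r)))
          (fun i _ _ => sq_nonneg (A j i))
        rwa [Finset.sum_pair hk] at h3
      have hoff : (A j k)^2 ≤ 1/4 := by nlinarith [hdiag, sq_nonneg (A j j - 1/2)]
      have habs : |A j k| ≤ 1/2 := by
        nlinarith [sq_abs (A j k), abs_nonneg (A j k)]
      rw [hBjk, if_neg hk, zero_sub, abs_neg]
      linarith
  have hA : |A.mulVec p j| ≤ ∑ k, |A j k| * |p k| := by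
    rw [Matrix.mulVec, dotProduct]
    exact (Finset.abs_sum_le_sum_abs _ _).trans (le_of_eq (by simp [abs_mul]))
  have hB : |B.mulVec p j| ≤ ∑ k, |B j k| * |p k| := by
    rw [Matrix.mulVec, dotProduct]
    exact (Finset.abs_sum_le_sum_abs _ _).trans (le_of_eq (by simp [abs_mul]))
  calc |A.mulVec p j| + |B.mulVec p j|
      ≤ (∑ k, |A j k| * |p k|) + ∑ k, |B j k| * |p k| := add_le_add hA hB
    _ = ∑ k, (|A j k| + |B j k|) * |p k| := by
        rw [← Finset.sum_add_distrib]
        exact Finset.sum_congr rfl (fun k _ => (add_mul _ _ _).symm)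
    _ ≤ ∑ k, 1 * |p k| := by
        refine Finset.sum_le_sum (fun k _ => ?_)
        exact mul_le_mul_of_nonneg_right (key k) (abs_nonneg _)
    _ = ∑ i, |p i| := by simp
end

section
/- Let x, y ∈ ℝ^r satisfy x^T y = 0, and set p = x + y. Then for every index j, ‖p‖₂² ≥ (|x_j| + |y_j|)², and consequently ‖p‖₂ ≥ |x_j| + |y_j|. -/
open BigOperators

/-- If `x ⊥ y` and `p = x + y`, then for every index `j`,
`‖p‖₂² ≥ (|x_j| + |y_j|)²` and hence `‖p‖₂ ≥ |x_j| + |y_j|`. -/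
theorem stmt5 (r : ℕ) (x y : Fin r → ℝ) (hortho : ∑ i, x i * y i = 0) :
    let p := x + y
    ∀ j : Fin r,
      (|x j| + |y j|) ^ 2 ≤ ∑ i, (p i) ^ 2 ∧
      |x j| + |y j| ≤ Real.sqrt (∑ i, (p i) ^ 2) := by
  intro p j
  have hsum : ∑ i, (p i) ^ 2 = ∑ i, (x i) ^ 2 + ∑ i, (y i) ^ 2 := by
    have h : ∀ i, (p i) ^ 2 = x i ^ 2 + y i ^ 2 + 2 * (x i * y i) := by
      intro i; show (x i + y i) ^ 2 = _; ring
    simp_rw [h, Finset.sum_add_distrib, ← Finset.mul_sum, hortho]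
    ring
  have hx : ∑ i, (x i) ^ 2 = x j ^ 2 + ∑ i ∈ Finset.univ.erase j, x i ^ 2 :=
    (Finset.add_sum_erase _ _ (Finset.mem_univ j)).symm
  have hy : ∑ i, (y i) ^ 2 = y j ^ 2 + ∑ i ∈ Finset.univ.erase j, y i ^ 2 :=
    (Finset.add_sum_erase _ _ (Finset.mem_univ j)).symm
  have hxy : x j * y j = -∑ i ∈ Finset.univ.erase j, x i * y i := by
    have h := Finset.add_sum_erase Finset.univ (fun i => x i * y i) (Finset.mem_univ j)
    rw [hortho] at h
    linarith
  have habs : |x j * y j| ≤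
      ∑ i ∈ Finset.univ.erase j, (x i ^ 2 + y i ^ 2) / 2 := by
    rw [hxy, abs_neg]
    calc |∑ i ∈ Finset.univ.erase j, x i * y i|
        ≤ ∑ i ∈ Finset.univ.erase j, |x i * y i| := Finset.abs_sum_le_sum_abs _ _
      _ ≤ ∑ i ∈ Finset.univ.erase j, (x i ^ 2 + y i ^ 2) / 2 :=
          Finset.sum_le_sum fun i _ => by
            rw [abs_mul]
            nlinarith [sq_nonneg (|x i| - |y i|), sq_abs (x i), sq_abs (y i),
              abs_nonneg (x i), abs_nonneg (y i)]
  have hsplit : ∑ i ∈ Finset.univ.erase j, (x i ^ 2 + y i ^ 2) / 2 =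
      ((∑ i ∈ Finset.univ.erase j, x i ^ 2) + ∑ i ∈ Finset.univ.erase j, y i ^ 2) / 2 := by
    rw [← Finset.sum_add_distrib, ← Finset.sum_div]
  have hmain : (|x j| + |y j|) ^ 2 ≤ ∑ i, (p i) ^ 2 := by
    have h1 : (|x j| + |y j|) ^ 2 = x j ^ 2 + y j ^ 2 + 2 * |x j * y j| := by
      rw [abs_mul]
      have hx2 := sq_abs (x j)
      have hy2 := sq_abs (y j)
      nlinarith
    rw [hsum, hx, hy, h1]
    rw [hsplit] at habs
    linarith
  refine ⟨hmain, ?_⟩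
  have h0 : (0:ℝ) ≤ |x j| + |y j| := by positivity
  rw [show |x j| + |y j| = Real.sqrt ((|x j| + |y j|) ^ 2) by
    rw [Real.sqrt_sq h0]]
  exact Real.sqrt_le_sqrt hmain
end

section
/- For nonnegative variables p, q ∈ ℝ^E subject to Σ_{(i,j)∈E} u_{ij}(p_{ij} + q_{ij}) ≤ 1 (with all u_{ij} > 0 and all x_{ij} > 0), the maximum of Σ_{(i,j)∈E} x_{ij}^{-1}(p_{ij} − q_{ij})² equals max_{(i,j)∈E} 1/(x_{ij} u_{ij}²). -/
open BigOperators

/-- Over `p, q ≥ 0` with `∑ u_e (p_e + q_e) ≤ 1` (all `u_e, x_e > 0`), the maximum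
of `∑ x_e⁻¹ (p_e − q_e)²` equals `max_e 1 / (x_e u_e²)`. -/
theorem stmt6 (ι : Type*) [Fintype ι] [Nonempty ι] (u x : ι → ℝ)
    (hu : ∀ e, 0 < u e) (hx : ∀ e, 0 < x e) :
    IsGreatest
      {t : ℝ | ∃ p q : ι → ℝ, (∀ e, 0 ≤ p e) ∧ (∀ e, 0 ≤ q e) ∧
        (∑ e, u e * (p e + q e)) ≤ 1 ∧ t = ∑ e, (x e)⁻¹ * (p e - q e) ^ 2}
      (Finset.univ.sup' Finset.univ_nonempty (fun e => 1 / (x e * (u e) ^ 2))) := by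
  classical
  constructor
  · obtain ⟨e₀, -, he₀⟩ := Finset.exists_mem_eq_sup' Finset.univ_nonempty
      (fun e => 1 / (x e * (u e) ^ 2))
    refine ⟨fun e => if e = e₀ then (u e₀)⁻¹ else 0, fun _ => 0, ?_, fun _ => le_rfl, ?_, ?_⟩
    · intro e
      dsimp only
      split_ifs
      · exact inv_nonneg.mpr (hu e₀).le
      · exact le_rfl
    · have : (∑ e, u e * ((if e = e₀ then (u e₀)⁻¹ else 0) + 0)) = 1 := by
        simp [mul_ite, mul_inv_cancel₀ (hu e₀).ne']
      exact le_of_eq this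
    · rw [he₀]
      have h1 : ∀ e, (x e)⁻¹ * ((fun e => if e = e₀ then (u e₀)⁻¹ else 0) e - (fun _ => (0:ℝ)) e) ^ 2 =
          if e = e₀ then (x e₀)⁻¹ * ((u e₀)⁻¹) ^ 2 else 0 := by
        intro e
        by_cases h : e = e₀
        · subst h; rw [if_pos rfl]; dsimp only; rw [if_pos rfl]; ring
        · rw [if_neg h]; dsimp only; rw [if_neg h]; ring
      rw [Finset.sum_congr rfl fun e _ => h1 e, Finset.sum_ite_eq' _ e₀]
      simp only [Finset.mem_univ, if_true]
      rw [one_div, mul_inv]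
      ring
  · rintro t ⟨p, q, hp, hq, hc, rfl⟩
    set M := Finset.univ.sup' Finset.univ_nonempty (fun e => 1 / (x e * (u e) ^ 2)) with hM
    have hM0 : 0 ≤ M := by
      obtain ⟨e₀⟩ := ‹Nonempty ι›
      refine le_trans ?_ (Finset.le_sup' _ (Finset.mem_univ e₀))
      have := hx e₀; have := hu e₀; positivity
    have key : ∀ e, (x e)⁻¹ * (p e - q e) ^ 2 ≤ M * (u e * (p e + q e)) ^ 2 := by
      intro e
      have h1 : (p e - q e) ^ 2 ≤ (p e + q e) ^ 2 := by
        have := hp e; have := hq e; nlinarith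
      have h2 : (x e)⁻¹ * (p e - q e) ^ 2 ≤ (x e)⁻¹ * (p e + q e) ^ 2 := by
        exact mul_le_mul_of_nonneg_left h1 (inv_nonneg.mpr (hx e).le)
      refine h2.trans ?_
      have h3 : (x e)⁻¹ * (p e + q e) ^ 2 = (1 / (x e * (u e) ^ 2)) * (u e * (p e + q e)) ^ 2 := by
        have hue := (hu e).ne'
        have hxe := (hx e).ne'
        field_simp
      rw [h3]
      exact mul_le_mul_of_nonneg_right
        (Finset.le_sup' (fun e => 1 / (x e * (u e) ^ 2)) (Finset.mem_univ e)) (by positivity)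
    calc (∑ e, (x e)⁻¹ * (p e - q e) ^ 2) ≤ ∑ e, M * (u e * (p e + q e)) ^ 2 :=
          Finset.sum_le_sum fun e _ => key e
      _ = M * ∑ e, (u e * (p e + q e)) ^ 2 := by rw [Finset.mul_sum]
      _ ≤ M * (∑ e, u e * (p e + q e)) ^ 2 := by
          refine mul_le_mul_of_nonneg_left ?_ hM0
          exact Finset.sum_sq_le_sq_sum_of_nonneg fun e _ => by
            have := hp e; have := hq e; have := (hu e).le; positivity
      _ ≤ M * 1 := by
          refine mul_le_mul_of_nonneg_left ?_ hM0
          have h0 : 0 ≤ ∑ e, u e * (p e + q e) :=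
            Finset.sum_nonneg fun e _ => by have := hp e; have := hq e; have := (hu e).le; positivity
          nlinarith
      _ = M := mul_one M
end

section
/- Let G be a connected graph, S a set of arcs whose removal leaves G connected. Fix conductances y_{uv} = 1/x_{uv} for arcs not in S, set y_{st} = ε for arcs in S, and let f(ε) be the unique DC power flow for fixed supply/demand vector b. Then as ε → 0: (a) f_{st}(ε) → 0 for every (s,t) ∈ S; (b) for each arc (u,v) ∉ S, f_{uv}(ε) converges to the flow f̄_{uv} of the DC power flow on G − S with the same b. -/
set_option maxHeartbeats 1000000

open Matrix BigOperators

/-- `N` is the node-arc incidence matrix of a directed graph. -/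
def IsIncidenceMatrix {n m : ℕ} (N : Matrix (Fin n) (Fin m) ℝ) : Prop :=
  ∀ e : Fin m, ∃ i j : Fin n, i ≠ j ∧
    ∀ k : Fin n, N k e = if k = i then 1 else if k = j then -1 else 0

lemma incidence_col_sum {n m : ℕ} {N : Matrix (Fin n) (Fin m) ℝ}
    (hinc : IsIncidenceMatrix N) (e : Fin m) : ∑ k, N k e = 0 := by
  obtain ⟨i, j, hij, h⟩ := hinc e
  have h2 : ∀ k, N k e = (if k = i then (1:ℝ) else 0) + (if k = j then (-1:ℝ) else 0) := by
    intro k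
    rw [h k]
    by_cases hki : k = i
    · subst hki; simp [hij]
    · by_cases hkj : k = j <;> simp [hki, hkj, Ne.symm hij]
  simp [h2, Finset.sum_add_distrib]

lemma ker_lemma {n : ℕ} {α : Type*} [Fintype α]
    (M : Matrix (Fin (n+1)) α ℝ)
    (hcol : ∀ e, ∑ k, M k e = 0) (hrank : M.rank = n)
    (v : Fin (n+1) → ℝ) (hv : Mᵀ.mulVec v = 0) (hsum : ∑ i, v i = 0) : v = 0 := by
  classical
  set L := Mᵀ.mulVecLin with hL
  have hrange : Module.finrank ℝ (LinearMap.range L) = n := by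
    have h1 : Mᵀ.rank = n := by rw [Matrix.rank_transpose]; exact hrank
    exact h1
  have hker : Module.finrank ℝ (LinearMap.ker L) = 1 := by
    have h := LinearMap.finrank_range_add_finrank_ker L
    rw [hrange] at h
    have h2 : Module.finrank ℝ (Fin (n+1) → ℝ) = n + 1 := by simp
    omega
  have hone_ne : (fun _ => (1:ℝ) : Fin (n+1) → ℝ) ≠ 0 := by
    intro h; have := congrFun h 0; simp at this
  have hones : (fun _ => (1:ℝ)) ∈ LinearMap.ker L := by
    rw [LinearMap.mem_ker]
    funext e
    simp only [hL, Matrix.mulVecLin_apply, Matrix.mulVec, dotProduct,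
      Matrix.transpose_apply, mul_one]
    exact hcol e
  have hspan : Submodule.span ℝ {(fun _ => (1:ℝ) : Fin (n+1) → ℝ)} = LinearMap.ker L := by
    apply Submodule.eq_of_le_of_finrank_le
    · rw [Submodule.span_le, Set.singleton_subset_iff]; exact hones
    · rw [hker, finrank_span_singleton hone_ne]
  have hvmem : v ∈ LinearMap.ker L := by
    rw [LinearMap.mem_ker]; simp only [hL, Matrix.mulVecLin_apply]; exact hv
  rw [← hspan, Submodule.mem_span_singleton] at hvmem
  obtain ⟨t, ht⟩ := hvmem
  have htsum : t * (n + 1) = 0 := by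
    have h3 := hsum
    rw [← ht] at h3
    simpa [Finset.mul_sum, mul_comm] using h3
  have ht0 : t = 0 := by
    rcases mul_eq_zero.1 htsum with h | h
    · exact h
    · exfalso
      have hne : ((n:ℝ)+1) ≠ 0 := by positivity
      exact hne (by exact_mod_cast h)
  rw [← ht, ht0]; simp

lemma MDM {k : ℕ} {α : Type*} [Fintype α] [DecidableEq α] (M : Matrix (Fin k) α ℝ)
    (d : α → ℝ) (i j : Fin k) :
    (M * Matrix.diagonal d * Mᵀ) i j = ∑ e, d e * M i e * M j e := by
  rw [Matrix.mul_apply]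
  refine Finset.sum_congr rfl fun e _ => ?_
  rw [Matrix.mul_apply]
  simp [Matrix.diagonal_apply, mul_ite, Finset.sum_ite_eq, Matrix.transpose_apply]
  left; ring

lemma quad {k : ℕ} {α : Type*} [Fintype α] [DecidableEq α] (M : Matrix (Fin k) α ℝ)
    (d : α → ℝ) (c : ℝ) (v : Fin k → ℝ) :
    v ⬝ᵥ (M * Matrix.diagonal d * Mᵀ + c • (Matrix.of fun _ _ => (1:ℝ))).mulVec v
      = ∑ e, d e * (Mᵀ.mulVec v e)^2 + c * (∑ i, v i)^2 := by
  rw [Matrix.add_mulVec, dotProduct_add]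
  congr 1
  · rw [Matrix.mul_assoc, ← Matrix.mulVec_mulVec, Matrix.dotProduct_mulVec,
      ← Matrix.mulVec_transpose, ← Matrix.mulVec_mulVec]
    simp only [Matrix.mulVec_diagonal, dotProduct]
    exact Finset.sum_congr rfl fun e _ => by ring
  · simp only [Matrix.smul_mulVec, dotProduct_smul, smul_eq_mul]
    congr 1
    simp only [dotProduct, Matrix.mulVec, Matrix.of_apply, one_mul]
    rw [pow_two, ← Finset.sum_mul]

/-- Let `S` be a set of arcs whose removal keeps the graph connected. Setting the
conductance of arcs in `S` to `ε` and fixing the others at `1/x_e`, as `ε → 0⁺`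
the DC power flow on arcs in `S` tends to `0`, and on arcs outside `S` it tends
to the DC power flow of the graph with `S` removed (same supply vector `b`). -/
theorem stmt15 (n m : ℕ) (N : Matrix (Fin (n + 1)) (Fin m) ℝ)
    (hinc : IsIncidenceMatrix N) (hconn : N.rank = n)
    (S : Finset (Fin m))
    (hconn' : (N.submatrix id (fun e : {e : Fin m // e ∉ S} => (e : Fin m))).rank = n)
    (x : Fin m → ℝ) (hx : ∀ e, 0 < x e)
    (b : Fin (n + 1) → ℝ) (hb : ∑ i, b i = 0) :
    let E : Matrix (Fin (n + 1)) (Fin (n + 1)) ℝ := Matrix.of fun _ _ => 1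
    let yf : ℝ → (Fin m → ℝ) := fun ε e => if e ∈ S then ε else (x e)⁻¹
    let f : ℝ → (Fin m → ℝ) := fun ε =>
      (Matrix.diagonal (yf ε) * Nᵀ *
        (N * Matrix.diagonal (yf ε) * Nᵀ + ((n : ℝ) + 1)⁻¹ • E)⁻¹).mulVec b
    let N' : Matrix (Fin (n + 1)) {e : Fin m // e ∉ S} ℝ :=
      N.submatrix id (fun e : {e : Fin m // e ∉ S} => (e : Fin m))
    let y' : {e : Fin m // e ∉ S} → ℝ := fun e => (x (e : Fin m))⁻¹
    let fbar : {e : Fin m // e ∉ S} → ℝ :=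
      (Matrix.diagonal y' * N'ᵀ *
        (N' * Matrix.diagonal y' * N'ᵀ + ((n : ℝ) + 1)⁻¹ • E)⁻¹).mulVec b
    (∀ e ∈ S, Filter.Tendsto (fun ε : ℝ => f ε e)
        (nhdsWithin 0 (Set.Ioi 0)) (nhds 0)) ∧
      (∀ (e : Fin m) (he : e ∉ S), Filter.Tendsto (fun ε : ℝ => f ε e)
        (nhdsWithin 0 (Set.Ioi 0)) (nhds (fbar ⟨e, he⟩))) := by
  intro E yf f N' y' fbar
  classical
  set c : ℝ := ((n : ℝ) + 1)⁻¹ with hc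
  have hcpos : 0 < c := by rw [hc]; positivity
  set J : ℝ → Matrix (Fin (n+1)) (Fin (n+1)) ℝ :=
    fun ε => N * Matrix.diagonal (yf ε) * Nᵀ + c • E with hJdef
  -- values of yf at 0
  have hyf0S : ∀ e ∈ S, yf 0 e = 0 := fun e he => by
    show (if e ∈ S then (0:ℝ) else (x e)⁻¹) = 0; simp [he]
  have hyf0nS : ∀ e, e ∉ S → yf 0 e = (x e)⁻¹ := fun e he => by
    show (if e ∈ S then (0:ℝ) else (x e)⁻¹) = (x e)⁻¹; simp [he]
  have hyf0nonneg : ∀ e, 0 ≤ yf 0 e := by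
    intro e
    by_cases he : e ∈ S
    · rw [hyf0S e he]
    · rw [hyf0nS e he]; exact (inv_pos.2 (hx e)).le
  -- positive definiteness of J 0
  have hpd : (J 0).PosDef := by
    rw [Matrix.posDef_iff_dotProduct_mulVec]
    constructor
    · -- Hermitian
      ext i j
      simp only [Matrix.conjTranspose_apply, star_trivial, hJdef,
        Matrix.add_apply, Matrix.smul_apply, MDM, Matrix.of_apply, smul_eq_mul]
      congr 1
      exact Finset.sum_congr rfl fun e _ => by ring
    · intro v hv
      have hstar : star v = v := by funext i; exact star_trivial _
      rw [hstar]
      have hq := quad N (yf 0) c v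
      rw [show (J 0).mulVec v =
        (N * Matrix.diagonal (yf 0) * Nᵀ + c • (Matrix.of fun _ _ => (1:ℝ))).mulVec v from rfl]
      rw [hq]
      have h1 : 0 ≤ ∑ e, yf 0 e * (Nᵀ.mulVec v e)^2 :=
        Finset.sum_nonneg fun e _ => mul_nonneg (hyf0nonneg e) (sq_nonneg _)
      have h2 : 0 ≤ c * (∑ i, v i)^2 := mul_nonneg hcpos.le (sq_nonneg _)
      rcases lt_or_eq_of_le (add_nonneg h1 h2) with h | h
      · exact h
      · exfalso
        have h0 : ∑ e, yf 0 e * (Nᵀ.mulVec v e)^2 = 0 ∧ c * (∑ i, v i)^2 = 0 :=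
          (add_eq_zero_iff_of_nonneg h1 h2).1 h.symm
        have hsum0 : ∑ i, v i = 0 := by
          have := h0.2
          have h3 : ((∑ i, v i))^2 = 0 := by
            rcases mul_eq_zero.1 this with h4 | h4
            · exact absurd h4 hcpos.ne'
            · exact h4
          exact pow_eq_zero_iff (by norm_num) |>.1 h3
        have hterm : ∀ e ∈ Finset.univ, yf 0 e * (Nᵀ.mulVec v e)^2 = 0 :=
          (Finset.sum_eq_zero_iff_of_nonneg
            (fun e _ => mul_nonneg (hyf0nonneg e) (sq_nonneg _))).1 h0.1
        have hw : ∀ (e : Fin m), e ∉ S → Nᵀ.mulVec v e = 0 := by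
          intro e he
          have := hterm e (Finset.mem_univ e)
          rw [hyf0nS e he] at this
          rcases mul_eq_zero.1 this with h4 | h4
          · exact absurd h4 (inv_pos.2 (hx e)).ne'
          · exact pow_eq_zero_iff (by norm_num) |>.1 h4
        have hv0 : v = 0 := by
          apply ker_lemma N' (fun e' => incidence_col_sum hinc e') hconn' v _ hsum0
          funext e'
          show ∑ k, N'ᵀ e' k * v k = 0
          have : ∑ k, N'ᵀ e' k * v k = Nᵀ.mulVec v (e' : Fin m) := by
            simp [Matrix.transpose_apply, Matrix.mulVec, dotProduct, N',
              Matrix.submatrix_apply]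
          rw [this]
          exact hw e' e'.2
        exact hv hv0
  have hdet : IsUnit (J 0).det := hpd.det_pos.ne'.isUnit
  -- continuity
  have hyfc : Continuous yf := by
    apply continuous_pi
    intro e
    show Continuous fun ε : ℝ => if e ∈ S then ε else (x e)⁻¹
    by_cases he : e ∈ S
    · simpa [he] using (continuous_id' : Continuous fun ε : ℝ => ε)
    · simpa [he] using (continuous_const : Continuous fun _ : ℝ => (x e)⁻¹)
  have hJc : Continuous J := by
    apply Continuous.add
    · exact (continuous_const.matrix_mul (hyfc.matrix_diagonal)).matrix_mul continuous_const
    · exact continuous_const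
  have hInv : ContinuousAt (fun ε => (J ε)⁻¹) 0 := by
    have h1 : ContinuousAt Ring.inverse (J 0).det := by
      have := NormedRing.inverse_continuousAt hdet.unit
      rwa [hdet.unit_spec] at this
    exact (continuousAt_matrix_inv (J 0) h1).comp hJc.continuousAt
  have hAc : ContinuousAt (fun ε => Matrix.diagonal (yf ε) * Nᵀ * (J ε)⁻¹) 0 := by
    have h1 : Continuous fun ε : ℝ => Matrix.diagonal (yf ε) * Nᵀ :=
      (hyfc.matrix_diagonal).matrix_mul continuous_const
    have hmul : Continuous fun p : Matrix (Fin m) (Fin (n+1)) ℝ ×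
        Matrix (Fin (n+1)) (Fin (n+1)) ℝ => p.1 * p.2 :=
      continuous_fst.matrix_mul continuous_snd
    exact hmul.continuousAt.comp (h1.continuousAt.prodMk hInv)
  have hfc : ∀ e : Fin m, ContinuousAt (fun ε => f ε e) 0 := by
    intro e
    have hmv0 : Continuous fun M : Matrix (Fin m) (Fin (n+1)) ℝ => M.mulVec b :=
      Continuous.matrix_mulVec continuous_id continuous_const
    have hmv : Continuous fun M : Matrix (Fin m) (Fin (n+1)) ℝ => M.mulVec b e :=
      (continuous_apply e).comp hmv0
    exact hmv.continuousAt.comp hAc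
  constructor
  · intro e he
    have h0 : f 0 e = 0 := by
      show (Matrix.diagonal (yf 0) * Nᵀ * (J 0)⁻¹).mulVec b e = 0
      have hrow : ∀ j, (Matrix.diagonal (yf 0) * Nᵀ * (J 0)⁻¹) e j = 0 := by
        intro j
        rw [Matrix.mul_apply]
        apply Finset.sum_eq_zero
        intro k _
        rw [Matrix.diagonal_mul, hyf0S e he, zero_mul, zero_mul]
      simp [Matrix.mulVec, dotProduct, hrow]
    have ht : Filter.Tendsto (fun ε : ℝ => f ε e) (nhdsWithin 0 (Set.Ioi 0))
        (nhds (f 0 e)) := (hfc e).continuousWithinAt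
    rw [h0] at ht
    exact ht
  · intro e he
    have hJeq : N' * Matrix.diagonal y' * N'ᵀ + c • E = J 0 := by
      rw [hJdef]
      congr 1
      ext i j
      rw [MDM, MDM]
      have hstep1 : ∑ a : {e : Fin m // e ∉ S}, y' a * N' i a * N' j a
          = ∑ a ∈ Sᶜ, (x a)⁻¹ * N i a * N j a := by
        rw [Finset.sum_subtype (p := fun a : Fin m => a ∉ S) Sᶜ
          (fun a => Finset.mem_compl) (fun a => (x a)⁻¹ * N i a * N j a)]
        rfl
      rw [hstep1]
      rw [show ∑ a : Fin m, yf 0 a * N i a * N j a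
          = ∑ a ∈ Sᶜ, yf 0 a * N i a * N j a from
        (Finset.sum_subset (Finset.subset_univ Sᶜ) (fun a _ ha => by
          have haS : a ∈ S := by simpa using ha
          rw [hyf0S a haS, zero_mul, zero_mul])).symm]
      exact (Finset.sum_congr rfl fun a ha => by
        rw [hyf0nS a (Finset.mem_compl.1 ha)]).symm
    have hrowe : ∀ k, (Matrix.diagonal y' * N'ᵀ) ⟨e, he⟩ k
        = (Matrix.diagonal (yf 0) * Nᵀ) e k := by
      intro k
      rw [Matrix.diagonal_mul, Matrix.diagonal_mul, hyf0nS e he]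
      rfl
    have hAA : ∀ j, (Matrix.diagonal y' * N'ᵀ * (J 0)⁻¹) ⟨e, he⟩ j
        = (Matrix.diagonal (yf 0) * Nᵀ * (J 0)⁻¹) e j := by
      intro j
      rw [Matrix.mul_apply, Matrix.mul_apply]
      exact Finset.sum_congr rfl fun k _ => by rw [hrowe k]
    have heq : fbar ⟨e, he⟩ = f 0 e := by
      show (Matrix.diagonal y' * N'ᵀ * (N' * Matrix.diagonal y' * N'ᵀ + c • E)⁻¹).mulVec b ⟨e, he⟩
        = (Matrix.diagonal (yf 0) * Nᵀ * (J 0)⁻¹).mulVec b e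
      rw [hJeq]
      simp only [Matrix.mulVec, dotProduct]
      exact Finset.sum_congr rfl fun j _ => by rw [hAA j]
    have ht : Filter.Tendsto (fun ε : ℝ => f ε e) (nhdsWithin 0 (Set.Ioi 0))
        (nhds (f 0 e)) := (hfc e).continuousWithinAt
    rw [← heq] at ht
    exact ht
end
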